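/- Let (X,𝒫) be a regular σ-space. If every 𝒫-open cover of X has a locally finite refinement covering X, then every 𝒫-open cover 𝒜 of X has a locally finite refinement S = {S_α : α ∈ Λ} covering X such that the collection of closures {𝒫-cl(S_α) : α ∈ Λ} is also a locally finite refinement of 𝒜 covering X. -/

import Mathlib

open Set

variable {X : Type*}

/-- A σ-space structure: contains ∅ and univ, closed under countable unions
and finite (binary) intersections. -/
def IsSigmaStructure (P : Set (Set X)) : Prop :=
  ∅ ∈ P ∧ Set.univ ∈ P ∧
  (∀ S : Set (Set X), S.Countable → S ⊆ P → ⋃₀ S ∈ P) ∧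
  (∀ U ∈ P, ∀ V ∈ P, U ∩ V ∈ P)

/-- The 𝒫-closure of M: intersection of all 𝒫-closed sets containing M. -/
def sCl (P : Set (Set X)) (M : Set X) : Set X :=
  ⋂₀ {F | Fᶜ ∈ P ∧ M ⊆ F}

/-- A collection is locally finite if every point has a 𝒫-open neighborhood
meeting only finitely many members. -/
def SLocallyFinite (P : Set (Set X)) (A : Set (Set X)) : Prop :=
  ∀ x : X, ∃ N ∈ P, x ∈ N ∧ {a ∈ A | (a ∩ N).Nonempty}.Finite

/-- A pairwise open cover of the bispace (X, P, Q). -/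
def PairwiseOpenCover (P Q : Set (Set X)) (B : Set (Set X)) : Prop :=
  ⋃₀ B = Set.univ ∧ B ⊆ P ∪ Q ∧
  (∃ U ∈ B, U ∈ P ∧ U.Nonempty) ∧ (∃ V ∈ B, V ∈ Q ∧ V.Nonempty)

/-- B is a parallel refinement of the pairwise open cover A. -/
def ParallelRefinement (P Q : Set (Set X)) (A B : Set (Set X)) : Prop :=
  PairwiseOpenCover P Q B ∧
  (∀ U ∈ B, U ∈ P → ∃ V ∈ A, V ∈ P ∧ U ⊆ V) ∧
  (∀ U ∈ B, U ∈ Q → ∃ V ∈ A, V ∈ Q ∧ U ⊆ V)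

/-- M is 𝒫_{𝒰x}-open. -/
def PUxOpen (P Q : Set (Set X)) (U : Set (Set X)) (x : X) (M : Set X) : Prop :=
  ((∃ W ∈ U, W ∈ P ∧ x ∈ W) ∧ M ∈ P) ∨ ((∃ W ∈ U, W ∈ Q ∧ x ∈ W) ∧ M ∈ Q)

/-- B is a locally finite refinement of the pairwise open cover A. -/
def LocallyFiniteRefinement (P Q : Set (Set X)) (A B : Set (Set X)) : Prop :=
  ⋃₀ B = Set.univ ∧ (∀ b ∈ B, ∃ a ∈ A, b ⊆ a) ∧
  ∀ x : X, ∃ N, PUxOpen P Q A x N ∧ x ∈ N ∧ {b ∈ B | (b ∩ N).Nonempty}.Finite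

/-- Pairwise paracompactness: every pairwise open cover has a parallel
refinement which is a locally finite refinement of it. -/
def PairwiseParacompact (P Q : Set (Set X)) : Prop :=
  ∀ A, PairwiseOpenCover P Q A →
    ∃ B, ParallelRefinement P Q A B ∧ LocallyFiniteRefinement P Q A B

def PairwiseHausdorff (P Q : Set (Set X)) : Prop :=
  ∀ x y : X, x ≠ y → ∃ U ∈ P, ∃ V ∈ Q, x ∈ U ∧ y ∈ V ∧ U ∩ V = ∅

def PairwiseNormal (P Q : Set (Set X)) : Prop :=
  ∀ F₁ F₂ : Set X, F₁ᶜ ∈ P → F₂ᶜ ∈ Q → F₁ ∩ F₂ = ∅ →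
    ∃ G₁ ∈ P, ∃ G₂ ∈ Q, F₁ ⊆ G₂ ∧ F₂ ⊆ G₁ ∧ G₁ ∩ G₂ = ∅

/-- P is regular with respect to Q. -/
def RegularWrt (P Q : Set (Set X)) : Prop :=
  ∀ (x : X) (F : Set X), Fᶜ ∈ P → x ∉ F →
    ∃ U ∈ P, ∃ V ∈ Q, x ∈ U ∧ F ⊆ V ∧ U ∩ V = ∅

def PairwiseRegular (P Q : Set (Set X)) : Prop :=
  RegularWrt P Q ∧ RegularWrt Q P

/-- Regularity of a single σ-space. -/
def SRegular (P : Set (Set X)) : Prop := RegularWrt P P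

def StronglyPairwiseRegular (P Q : Set (Set X)) : Prop :=
  PairwiseRegular P Q ∧ SRegular P ∧ SRegular Q

/-- Half of condition C(1). -/
def CondC1Half (P Q : Set (Set X)) : Prop :=
  ∀ (FA FB : Set (Set X)), FA ⊆ P → (∀ F ∈ FB, Fᶜ ∈ Q) →
    ⋃₀ FA ⊆ ⋂₀ FB → ∃ K ∈ P, ⋃₀ FA ⊆ K ∧ K ⊆ ⋂₀ FB

/-- Condition C(1). -/
def CondC1 (P Q : Set (Set X)) : Prop := CondC1Half P Q ∧ CondC1Half Q P

/-- Condition C(2) for a fixed i (Pi ∈ {P, Q}). -/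
def CondC2Half (P Q Pi : Set (Set X)) : Prop :=
  ∀ (M : Set X) (B : Set (Set X)), B ⊆ P ∪ Q →
    (∀ b ∈ B, sCl Pi b ∩ M = ∅) →
    ∃ S ∈ Pi, M ⊆ S ∧ S ⊆ (⋃ b ∈ B, sCl Pi b)ᶜ

/-- Condition C(2). -/
def CondC2 (P Q : Set (Set X)) : Prop := CondC2Half P Q P ∧ CondC2Half P Q Q

/-- Paracompactness of a single σ-space: every open cover has a locally
finite open refinement covering X. -/
def SParacompact (P : Set (Set X)) : Prop :=
  ∀ A ⊆ P, ⋃₀ A = Set.univ →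
    ∃ B ⊆ P, ⋃₀ B = Set.univ ∧ (∀ b ∈ B, ∃ a ∈ A, b ⊆ a) ∧ SLocallyFinite P B

/-! By regularity every point of a member `a` of the cover lies in a 𝒫-open set whose
𝒫-closure is still inside `a`. A locally finite refinement of the cover by such sets does
the job: closures of its members stay inside members of `A`, and the closures form a locally
finite family because the complement of a 𝒫-open set missing `b` is 𝒫-closed and contains
`b`, hence contains `𝒫-cl b`. -/

section SigmaSpace

variable {P : Set (Set X)}

theorem subset_sCl (P : Set (Set X)) (M : Set X) : M ⊆ sCl P M :=
  fun _ hx _ hF => hF.2 hx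

theorem sCl_subset_of_compl_mem {M F : Set X} (hF : Fᶜ ∈ P) (hMF : M ⊆ F) : sCl P M ⊆ F :=
  fun _ hx => hx F ⟨hF, hMF⟩

theorem sCl_mono {M N : Set X} (hMN : M ⊆ N) : sCl P M ⊆ sCl P N :=
  fun _ hx F hF => hx F ⟨hF.1, hMN.trans hF.2⟩

theorem disjoint_sCl_of_mem {M N : Set X} (hN : N ∈ P) (hMN : Disjoint M N) :
    Disjoint (sCl P M) N :=
  Set.subset_compl_iff_disjoint_right.mp <|
    sCl_subset_of_compl_mem (by rwa [compl_compl]) (Set.subset_compl_iff_disjoint_right.mpr hMN)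

theorem sUnion_image_sCl_eq_univ {B : Set (Set X)} (hB : ⋃₀ B = univ) :
    ⋃₀ (sCl P '' B) = univ :=
  Set.eq_univ_of_univ_subset <| hB ▸ Set.sUnion_mono_subsets fun b => subset_sCl P b

theorem SLocallyFinite.image_sCl {B : Set (Set X)} (hB : SLocallyFinite P B) :
    SLocallyFinite P (sCl P '' B) := by
  intro x
  obtain ⟨N, hN, hxN, hfin⟩ := hB x
  refine ⟨N, hN, hxN, (hfin.image (sCl P)).subset ?_⟩
  rintro _ ⟨⟨b, hb, rfl⟩, hmeet⟩
  refine ⟨b, ⟨hb, ?_⟩, rfl⟩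
  rw [← Set.not_disjoint_iff_nonempty_inter] at hmeet ⊢
  exact fun hbN => hmeet (disjoint_sCl_of_mem hN hbN)

theorem SRegular.exists_sCl_subset (hReg : SRegular P) {a : Set X} (ha : a ∈ P) {x : X}
    (hx : x ∈ a) : ∃ U ∈ P, x ∈ U ∧ sCl P U ⊆ a := by
  obtain ⟨U, hU, V, hV, hxU, haV, hUV⟩ :=
    hReg x aᶜ (by rwa [compl_compl]) (Set.not_notMem.mpr hx)
  have hU_sub : U ⊆ Vᶜ :=
    Set.subset_compl_iff_disjoint_right.mpr (Set.disjoint_iff_inter_eq_empty.mpr hUV)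
  refine ⟨U, hU, hxU, (sCl_subset_of_compl_mem (by rwa [compl_compl]) hU_sub).trans ?_⟩
  exact Set.compl_subset_comm.mp haV

theorem SRegular.exists_cover_sCl_subset (hReg : SRegular P) {A : Set (Set X)} (hA : A ⊆ P)
    (hcov : ⋃₀ A = univ) :
    ∃ C ⊆ P, ⋃₀ C = univ ∧ ∀ c ∈ C, ∃ a ∈ A, sCl P c ⊆ a := by
  refine ⟨{U ∈ P | ∃ a ∈ A, sCl P U ⊆ a}, fun _ hU => hU.1, ?_, fun _ hU => hU.2⟩
  refine Set.eq_univ_of_forall fun x => ?_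
  obtain ⟨a, haA, hxa⟩ := Set.mem_sUnion.mp (hcov ▸ Set.mem_univ x)
  obtain ⟨U, hU, hxU, hUa⟩ := hReg.exists_sCl_subset (hA haA) hxa
  exact ⟨U, ⟨hU, a, haA, hUa⟩, hxU⟩

end SigmaSpace

theorem stmt_9_general {X : Type*} (P : Set (Set X))
    (hReg : SRegular P)
    (h : ∀ U ⊆ P, ⋃₀ U = Set.univ →
      ∃ B : Set (Set X), ⋃₀ B = Set.univ ∧ (∀ b ∈ B, ∃ a ∈ U, b ⊆ a) ∧
        SLocallyFinite P B) :
    ∀ A ⊆ P, ⋃₀ A = Set.univ →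
      ∃ S : Set (Set X), ⋃₀ S = Set.univ ∧ (∀ s ∈ S, ∃ a ∈ A, s ⊆ a) ∧
        SLocallyFinite P S ∧
        ⋃₀ (sCl P '' S) = Set.univ ∧ (∀ t ∈ sCl P '' S, ∃ a ∈ A, t ⊆ a) ∧
        SLocallyFinite P (sCl P '' S) := by
  intro A hA hcov
  obtain ⟨C, hCP, hCcov, hCA⟩ := hReg.exists_cover_sCl_subset hA hcov
  obtain ⟨S, hScov, hSC, hSlf⟩ := h C hCP hCcov
  have hSA : ∀ s ∈ S, ∃ a ∈ A, sCl P s ⊆ a := fun s hs => by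
    obtain ⟨c, hc, hsc⟩ := hSC s hs
    obtain ⟨a, ha, hca⟩ := hCA c hc
    exact ⟨a, ha, (sCl_mono hsc).trans hca⟩
  refine ⟨S, hScov, fun s hs => ?_, hSlf, sUnion_image_sCl_eq_univ hScov, ?_, hSlf.image_sCl⟩
  · obtain ⟨a, ha, hsa⟩ := hSA s hs
    exact ⟨a, ha, (subset_sCl P s).trans hsa⟩
  · rintro _ ⟨s, hs, rfl⟩
    exact hSA s hs

theorem stmt_9 {X : Type*} (P : Set (Set X)) (hP : IsSigmaStructure P)
    (hReg : SRegular P)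
    (h : ∀ U ⊆ P, ⋃₀ U = Set.univ →
      ∃ B : Set (Set X), ⋃₀ B = Set.univ ∧ (∀ b ∈ B, ∃ a ∈ U, b ⊆ a) ∧
        SLocallyFinite P B) :
    ∀ A ⊆ P, ⋃₀ A = Set.univ →
      ∃ S : Set (Set X), ⋃₀ S = Set.univ ∧ (∀ s ∈ S, ∃ a ∈ A, s ⊆ a) ∧
        SLocallyFinite P S ∧
        ⋃₀ (sCl P '' S) = Set.univ ∧ (∀ t ∈ sCl P '' S, ∃ a ∈ A, t ⊆ a) ∧
        SLocallyFinite P (sCl P '' S) :=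
  stmt_9_general P hReg h
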